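/- Let α ≥ 1 be a natural number, let x_i ∈ ℝ, and let f, Q : ℝ → ℝ be functions of class C^(α+2) such that the iterated derivatives of f of all orders j with 0 ≤ j ≤ α − 1 vanish at x_i (i.e., f has a zero of multiplicity at least α at x_i). Define Φ(x) = (α + 1)·((x − x_i)·f'(x) − α·f(x))·Q(x) − (x − x_i)·f(x)·Q'(x). Then the (α+1)-st iterated derivative of Φ at x_i satisfies Φ^(α+1)(x_i) = (α + 1)·( f^(α+1)(x_i)·Q(x_i) − f^(α)(x_i)·Q'(x_i) ). In particular, if Q(x_i) = f^(α)(x_i) and Q'(x_i) = f^(α+1)(x_i), then Φ^(α+1)(x_i) = 0. -/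

import Mathlib

/-!
Write `Φ = (α + 1) g Q - h Q'` with `g = (x - xᵢ) f' - α f` and `h = (x - xᵢ) f`. By Leibniz,
`g⁽ᵏ⁾(xᵢ) = (k - α) f⁽ᵏ⁾(xᵢ)` and `h⁽ᵏ⁺¹⁾(xᵢ) = (k + 1) f⁽ᵏ⁾(xᵢ)`, so both `g` and `h` vanish to
order `α + 1` at `xᵢ`. Hence in the Leibniz expansions of `(g Q)⁽ᵅ⁺¹⁾(xᵢ)` and `(h Q')⁽ᵅ⁺¹⁾(xᵢ)`
only the term carrying all derivatives on the first factor survives.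
-/

open Finset

section

variable {𝕜 : Type*} [NontriviallyNormedField 𝕜]

theorem iteratedDeriv_sub_const_at_self (k : ℕ) (a : 𝕜) :
    iteratedDeriv k (fun x => x - a) a = if k = 1 then 1 else 0 := by
  rw [iteratedDeriv_comp_sub_const k (fun x => x) a]
  beta_reduce
  rw [sub_self, iteratedDeriv_fun_id_zero]

theorem iteratedDeriv_succ_sub_mul_at_self {n : ℕ} {v : 𝕜 → 𝕜} {a : 𝕜}
    (hv : ContDiffAt 𝕜 (n + 1) v a) :
    iteratedDeriv (n + 1) (fun x => (x - a) * v x) a = (n + 1) * iteratedDeriv n v a := by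
  rw [iteratedDeriv_fun_mul (by fun_prop) hv]
  simp [iteratedDeriv_sub_const_at_self]

theorem iteratedDeriv_sub_mul_at_self_eq_zero {n : ℕ} {f : 𝕜 → 𝕜} {a : 𝕜}
    (hf : ContDiff 𝕜 n f) (hf₀ : ∀ k < n, iteratedDeriv k f a = 0) :
    ∀ k < n + 1, iteratedDeriv k (fun x => (x - a) * f x) a = 0
  | 0, _ => by simp
  | k + 1, hk => by
    rw [iteratedDeriv_succ_sub_mul_at_self (hf.of_le (by norm_cast; omega)).contDiffAt,
      hf₀ k (by omega), mul_zero]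

theorem iteratedDeriv_sub_mul_deriv_sub_const_mul_at_self {n : ℕ} {f : 𝕜 → 𝕜}
    (hf : ContDiff 𝕜 (n + 1) f) (a c : 𝕜) :
    iteratedDeriv n (fun x => (x - a) * deriv f x - c * f x) a
      = (n - c) * iteratedDeriv n f a := by
  have hf' : ContDiff 𝕜 n (deriv f) := hf.deriv'
  have hfn : ContDiff 𝕜 n f := hf.of_le le_self_add
  rw [iteratedDeriv_fun_sub (by fun_prop) (by fun_prop), iteratedDeriv_const_mul_field]
  cases n with
  | zero => simp
  | succ m =>
    rw [iteratedDeriv_succ_sub_mul_at_self (by fun_prop), ← iteratedDeriv_succ']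
    push_cast
    ring

theorem iteratedDeriv_sub_mul_deriv_sub_nat_mul_at_self_eq_zero {n : ℕ} {f : 𝕜 → 𝕜} {a : 𝕜}
    (hf : ContDiff 𝕜 (n + 1) f) (hf₀ : ∀ k < n, iteratedDeriv k f a = 0) :
    ∀ k < n + 1, iteratedDeriv k (fun x => (x - a) * deriv f x - n * f x) a = 0 := by
  intro k hk
  rw [iteratedDeriv_sub_mul_deriv_sub_const_mul_at_self (hf.of_le (by exact_mod_cast hk))]
  rcases (Nat.lt_succ_iff.mp hk).lt_or_eq with hk | rfl
  · rw [hf₀ k hk, mul_zero]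
  · rw [sub_self, zero_mul]

variable {𝔸 : Type*} [NormedRing 𝔸] [NormedAlgebra 𝕜 𝔸]

theorem iteratedDeriv_mul_at_of_iteratedDeriv_eq_zero {n : ℕ} {u v : 𝕜 → 𝔸} {a : 𝕜}
    (hu : ContDiffAt 𝕜 n u a) (hv : ContDiffAt 𝕜 n v a)
    (hu₀ : ∀ k < n, iteratedDeriv k u a = 0) :
    iteratedDeriv n (fun x => u x * v x) a = iteratedDeriv n u a * v a := by
  rw [iteratedDeriv_fun_mul hu hv, sum_range_succ,
    sum_eq_zero fun k hk => by rw [hu₀ k (mem_range.mp hk)]; simp]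
  simp

end

theorem obreshkoff_ehrlich_Phi_leading_derivative_general
    (α : ℕ) (xi : ℝ) (f Q : ℝ → ℝ)
    (hf : ContDiff ℝ (α + 2) f) (hQ : ContDiff ℝ (α + 2) Q)
    (hzero : ∀ j, j ≤ α - 1 → iteratedDeriv j f xi = 0)
    (Φ : ℝ → ℝ)
    (hΦ : Φ = fun x => ((α : ℝ) + 1) * ((x - xi) * deriv f x - (α : ℝ) * f x) * Q x
        - (x - xi) * f x * deriv Q x) :
    iteratedDeriv (α + 1) Φ xi
        = ((α : ℝ) + 1) * (iteratedDeriv (α + 1) f xi * Q xi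
            - iteratedDeriv α f xi * deriv Q xi) ∧
      (Q xi = iteratedDeriv α f xi → deriv Q xi = iteratedDeriv (α + 1) f xi →
        iteratedDeriv (α + 1) Φ xi = 0) := by
  have hf₀ : ∀ k < α, iteratedDeriv k f xi = 0 := fun k hk => hzero k (by omega)
  have hf₂ : ContDiff ℝ ((α + 1 : ℕ) + 1) f := by
    rwa [Nat.cast_succ, add_assoc, one_add_one_eq_two]
  have hQ₂ : ContDiff ℝ ((α + 1 : ℕ) + 1) Q := by
    rwa [Nat.cast_succ, add_assoc, one_add_one_eq_two]
  have hf₁ : ContDiff ℝ (α + 1 : ℕ) f := hf₂.of_le le_self_add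
  have hQ₁ : ContDiff ℝ (α + 1 : ℕ) Q := hQ₂.of_le le_self_add
  have hf' : ContDiff ℝ (α + 1 : ℕ) (deriv f) := hf₂.deriv'
  have hQ' : ContDiff ℝ (α + 1 : ℕ) (deriv Q) := hQ₂.deriv'
  have hΦ' : iteratedDeriv (α + 1) Φ xi = (α + 1) * (iteratedDeriv (α + 1) f xi * Q xi
      - iteratedDeriv α f xi * deriv Q xi) := by
    rw [hΦ, iteratedDeriv_fun_sub (by fun_prop) (by fun_prop),
      iteratedDeriv_mul_at_of_iteratedDeriv_eq_zero
        (u := fun x => ((α : ℝ) + 1) * ((x - xi) * deriv f x - α * f x))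
        (by fun_prop) (by fun_prop),
      iteratedDeriv_mul_at_of_iteratedDeriv_eq_zero (u := fun x => (x - xi) * f x)
        (by fun_prop) (by fun_prop)
        (iteratedDeriv_sub_mul_at_self_eq_zero (hf₁.of_le (by norm_cast; omega)) hf₀),
      iteratedDeriv_const_mul_field, iteratedDeriv_sub_mul_deriv_sub_const_mul_at_self hf₂,
      iteratedDeriv_succ_sub_mul_at_self hf₁.contDiffAt]
    · push_cast
      ring
    · intro k hk
      rw [iteratedDeriv_const_mul_field,
        iteratedDeriv_sub_mul_deriv_sub_nat_mul_at_self_eq_zero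
          (hf₂.of_le (by norm_cast; omega)) hf₀ k hk, mul_zero]
  exact ⟨hΦ', fun hQα hQα₁ => by rw [hΦ', hQα, hQα₁]; ring⟩

/-- Claim (8) of the paper, made precise: the `(α+1)`-st derivative of the numerator
function `Φ` of (6) at `x_i`, and its vanishing when `Q` matches `f^(α)` to first
order at `x_i`. -/
theorem obreshkoff_ehrlich_Phi_leading_derivative
    (α : ℕ) (hα : 1 ≤ α) (xi : ℝ) (f Q : ℝ → ℝ)
    (hf : ContDiff ℝ (α + 2) f) (hQ : ContDiff ℝ (α + 2) Q)
    (hzero : ∀ j, j ≤ α - 1 → iteratedDeriv j f xi = 0)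
    (Φ : ℝ → ℝ)
    (hΦ : Φ = fun x => ((α : ℝ) + 1) * ((x - xi) * deriv f x - (α : ℝ) * f x) * Q x
        - (x - xi) * f x * deriv Q x) :
    iteratedDeriv (α + 1) Φ xi
        = ((α : ℝ) + 1) * (iteratedDeriv (α + 1) f xi * Q xi
            - iteratedDeriv α f xi * deriv Q xi) ∧
      (Q xi = iteratedDeriv α f xi → deriv Q xi = iteratedDeriv (α + 1) f xi →
        iteratedDeriv (α + 1) Φ xi = 0) :=
  obreshkoff_ehrlich_Phi_leading_derivative_general α xi f Q hf hQ hzero Φ hΦ
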